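/- arXiv:2004.06388 — 2 statements merged into one kernel-verified Lean document; each statement's English description precedes it below -/
import Mathlib

section
/- Let A ∈ ℝ^{n×n} be a singular matrix and let A = M − N be a weak proper splitting of the second type of A. For each λ > 0 let B_λ = M_λ − N_λ be a weak splitting of the second type of B_λ = AᵀA + λI. Suppose that, as λ → 0⁺, the matrices N_λB_λ⁻¹ converge entrywise to a matrix L satisfying NA† ≥ L ≥ 0. Then ρ(M†N) < 1, and for every real number r such that ρ(M_λ⁻¹N_λ) → r as λ → 0⁺, one has r ≤ ρ(M†N). -/
open Matrix Filter Topology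

/-- The spectral radius of a real square matrix: the maximum (supremum) of the
moduli of its complex eigenvalues. -/
noncomputable def specRad {n : Type*} [Fintype n] [DecidableEq n]
    (B : Matrix n n ℝ) : ℝ :=
  sSup ((fun z : ℂ => ‖z‖) '' spectrum ℂ (B.map Complex.ofReal))

/-- Entrywise order on real matrices: `entryLE A B` means every entry of `A` is
at most the corresponding entry of `B`. -/
def entryLE {m n : Type*} (A B : Matrix m n ℝ) : Prop :=
  ∀ i j, A i j ≤ B i j

/-- `X` is the Moore–Penrose inverse of `A`. -/
def IsMoorePenrose {m n : Type*} [Fintype m] [Fintype n]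
    (A : Matrix m n ℝ) (X : Matrix n m ℝ) : Prop :=
  A * X * A = A ∧ X * A * X = X ∧ (A * X)ᵀ = A * X ∧ (X * A)ᵀ = X * A

/-!
Write `X = N M†`, `Y = N A†`, `X_λ = N_λ M_λ⁻¹` and `Y_λ = N_λ B_λ⁻¹`. Since `A A† = M M†` and
`A† A = M† M` for a proper splitting, both pairs satisfy `(1 - X) (1 + Y) = 1`. For `X ≥ 0` this
relation turns any `w` with `w + Y w > 0` and `Y w ≤ s w` into the Collatz–Wielandt bound
`ρ(X) ≤ s / (1 + s)`. With `w = 1` and `s` the sum of the entries of `Y ≥ 0` this gives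
`ρ(M† N) = ρ(X) < 1`. For `s > ρ(Y)` the Neumann series of `(s - Y)⁻¹` produces `w > 0` with
`Y w < s w`; as `L ≤ Y`, also `Y_λ w < s w` for small `λ`, so the limit `r` of
`ρ(M_λ⁻¹ N_λ) = ρ(X_λ)` is at most `ρ(Y) / (1 + ρ(Y))`. Finally every
eigenvalue `μ` of `Y` gives the eigenvalue `μ / (1 + μ)` of `X`, whence `ρ(Y) / (1 + ρ(Y)) ≤ ρ(X)`.
-/

section Nonneg

variable {n m k : Type*} [Fintype m]

theorem entryLE_zero_mul {P : Matrix n m ℝ} {Q : Matrix m k ℝ} (hP : entryLE 0 P)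
    (hQ : entryLE 0 Q) : entryLE 0 (P * Q) := fun i j =>
  Finset.sum_nonneg fun l _ => mul_nonneg (hP i l) (hQ l j)

theorem entryLE_zero_pow [Fintype n] [DecidableEq n] {P : Matrix n n ℝ} (hP : entryLE 0 P)
    (k : ℕ) : entryLE 0 (P ^ k) := by
  induction k with
  | zero => intro i j; by_cases h : i = j <;> simp [one_apply, h]
  | succ k ih => rw [pow_succ]; exact entryLE_zero_mul ih hP

theorem mulVec_nonneg {P : Matrix n m ℝ} (hP : entryLE 0 P) {w : m → ℝ} (hw : ∀ i, 0 ≤ w i)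
    (i : n) : 0 ≤ (P *ᵥ w) i :=
  Finset.sum_nonneg fun j _ => mul_nonneg (hP i j) (hw j)

theorem mulVec_le_mulVec {P Q : Matrix n m ℝ} (h : entryLE P Q) {w : m → ℝ} (hw : ∀ i, 0 ≤ w i)
    (i : n) : (P *ᵥ w) i ≤ (Q *ᵥ w) i :=
  Finset.sum_le_sum fun j _ => mul_le_mul_of_nonneg_right (h i j) (hw j)

end Nonneg

section SpectralRadius

variable {n : Type*} [Fintype n] [DecidableEq n]

theorem Matrix.exists_mulVec_eq_smul_of_mem_spectrum {K : Type*} [Field K] {B : Matrix n n K}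
    {z : K} (hz : z ∈ spectrum K B) : ∃ v ≠ 0, B *ᵥ v = z • v := by
  rw [← spectrum_toLin', ← Module.End.hasEigenvalue_iff_mem_spectrum] at hz
  obtain ⟨v, hv⟩ := hz.exists_hasEigenvector
  exact ⟨v, hv.2, Module.End.mem_eigenspace_iff.mp hv.1⟩

theorem specRad_nonneg (B : Matrix n n ℝ) : 0 ≤ specRad B :=
  Real.sSup_nonneg (by rintro _ ⟨z, -, rfl⟩; exact norm_nonneg z)

theorem norm_le_specRad {B : Matrix n n ℝ} {z : ℂ} (hz : z ∈ spectrum ℂ (B.map Complex.ofReal)) :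
    ‖z‖ ≤ specRad B :=
  le_csSup ((finite_spectrum _).image _).bddAbove ⟨z, hz, rfl⟩

theorem specRad_le {B : Matrix n n ℝ} {c : ℝ} (hc : 0 ≤ c)
    (h : ∀ z ∈ spectrum ℂ (B.map Complex.ofReal), ‖z‖ ≤ c) : specRad B ≤ c :=
  Real.sSup_le (by rintro _ ⟨z, hz, rfl⟩; exact h z hz) hc

theorem specRad_mul_comm (P Q : Matrix n n ℝ) : specRad (P * Q) = specRad (Q * P) := by
  suffices h : ∀ P Q : Matrix n n ℝ, specRad (P * Q) ≤ specRad (Q * P) from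
    (h P Q).antisymm (h Q P)
  intro P Q
  refine specRad_le (specRad_nonneg _) fun z hz => ?_
  rcases eq_or_ne z 0 with rfl | hz0
  · simpa using specRad_nonneg _
  · have hz' : z ∈ spectrum ℂ (P.map Complex.ofRealHom * Q.map Complex.ofRealHom) \ {0} :=
      ⟨by rwa [← Matrix.map_mul], hz0⟩
    rw [spectrum.nonzero_mul_comm, ← Matrix.map_mul] at hz'
    exact norm_le_specRad hz'.1

end SpectralRadius

section CollatzWielandt

variable {n : Type*} [Fintype n] [DecidableEq n]

theorem norm_le_of_mem_spectrum_of_mulVec_le {X : Matrix n n ℝ} (hX : entryLE 0 X) {w : n → ℝ}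
    (hw : ∀ i, 0 < w i) {c : ℝ} (hXw : ∀ i, (X *ᵥ w) i ≤ c * w i) {z : ℂ}
    (hz : z ∈ spectrum ℂ (X.map Complex.ofReal)) : ‖z‖ ≤ c := by
  obtain ⟨v, hv, hXv⟩ := exists_mulVec_eq_smul_of_mem_spectrum hz
  obtain ⟨j, hj⟩ := Function.ne_iff.mp hv
  have : Nonempty n := ⟨j⟩
  obtain ⟨i, hi⟩ := Finite.exists_max fun k => ‖v k‖ / w k
  set t := ‖v i‖ / w i
  have hvt : ∀ k, ‖v k‖ ≤ t * w k := fun k => (div_le_iff₀ (hw k)).mp (hi k)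
  have hvi : 0 < ‖v i‖ := by
    have := (div_pos (norm_pos_iff.mpr hj) (hw j)).trans_le (hi j)
    exact (div_pos_iff_of_pos_right (hw i)).mp this
  have key : ‖z‖ * ‖v i‖ ≤ c * ‖v i‖ := calc
    ‖z‖ * ‖v i‖ = ‖∑ k, (X i k : ℂ) * v k‖ := by
      rw [← norm_mul, ← smul_eq_mul, ← Pi.smul_apply, ← hXv]; rfl
    _ ≤ ∑ k, X i k * ‖v k‖ := by
      refine (norm_sum_le _ _).trans_eq (Finset.sum_congr rfl fun k _ => ?_)
      rw [norm_mul, Complex.norm_real, Real.norm_of_nonneg (hX i k)]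
    _ ≤ ∑ k, X i k * (t * w k) :=
      Finset.sum_le_sum fun k _ => mul_le_mul_of_nonneg_left (hvt k) (hX i k)
    _ = t * (X *ᵥ w) i := by
      rw [mulVec, dotProduct, Finset.mul_sum]
      exact Finset.sum_congr rfl fun k _ => by ring
    _ ≤ t * (c * w i) := mul_le_mul_of_nonneg_left (hXw i) (div_nonneg (norm_nonneg _) (hw i).le)
    _ = c * ‖v i‖ := by rw [mul_left_comm, div_mul_cancel₀ _ (hw i).ne']
  exact le_of_mul_le_mul_right key hvi

theorem specRad_le_of_mulVec_le {X : Matrix n n ℝ} (hX : entryLE 0 X) {w : n → ℝ}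
    (hw : ∀ i, 0 < w i) {c : ℝ} (hc : 0 ≤ c) (hXw : ∀ i, (X *ᵥ w) i ≤ c * w i) :
    specRad X ≤ c :=
  specRad_le hc fun _ hz => norm_le_of_mem_spectrum_of_mulVec_le hX hw hXw hz

end CollatzWielandt

section Resolvent

variable {n : Type*} [Fintype n] [DecidableEq n]

attribute [local instance] Matrix.frobeniusNormedRing Matrix.frobeniusNormedAlgebra

theorem spectralRadius_map_ofReal_le (B : Matrix n n ℝ) :
    spectralRadius ℂ (B.map Complex.ofReal) ≤ ENNReal.ofReal (specRad B) :=
  iSup₂_le fun _ hz => by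
    rw [← enorm_eq_nnnorm, ← ofReal_norm]
    exact ENNReal.ofReal_le_ofReal (norm_le_specRad hz)

theorem summable_pow_inv_smul_of_specRad_lt {Y : Matrix n n ℝ} {s : ℝ} (hs : specRad Y < s) :
    Summable fun k : ℕ => (s⁻¹ • Y) ^ k := by
  obtain ⟨t, hYt, hts⟩ := exists_between hs
  have ht : 0 < t := (specRad_nonneg Y).trans_lt hYt
  have hlt : spectralRadius ℂ (Y.map Complex.ofReal) < ENNReal.ofReal t :=
    (spectralRadius_map_ofReal_le Y).trans_lt ((ENNReal.ofReal_lt_ofReal_iff ht).2 hYt)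
  have hpow : ∀ᶠ k in atTop, ‖Y ^ k‖ ≤ t ^ k := by
    filter_upwards [(spectrum.pow_norm_pow_one_div_tendsto_nhds_spectralRadius
      (Y.map Complex.ofReal)).eventually_lt_const hlt, eventually_ne_atTop 0] with k hk hk0
    rw [ENNReal.ofReal_lt_ofReal_iff ht, one_div] at hk
    have hmap : (Y ^ k).map Complex.ofReal = Y.map Complex.ofReal ^ k :=
      Matrix.map_pow Y Complex.ofRealHom k
    rw [← frobenius_norm_map_eq _ _ Complex.norm_real, hmap,
      ← Real.rpow_inv_natCast_pow (norm_nonneg _) hk0]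
    exact pow_le_pow_left₀ (by positivity) hk.le k
  refine .of_norm_bounded_eventually (summable_geometric_of_lt_one (div_nonneg ht.le
    (ht.trans hts).le) ((div_lt_one (ht.trans hts)).2 hts)) ?_
  filter_upwards [Nat.cofinite_eq_atTop ▸ hpow] with k hk
  rw [smul_pow, norm_smul, norm_pow, norm_inv, Real.norm_of_nonneg (ht.trans hts).le, div_pow,
    div_eq_inv_mul, ← inv_pow]
  exact mul_le_mul_of_nonneg_left hk (pow_nonneg (inv_nonneg.2 (ht.trans hts).le) k)

theorem exists_pos_mulVec_lt_smul {Y : Matrix n n ℝ} (hY : entryLE 0 Y) {s : ℝ}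
    (hs : specRad Y < s) : ∃ w : n → ℝ, (∀ i, 0 < w i) ∧ ∀ i, (Y *ᵥ w) i < s * w i := by
  have hs0 : 0 < s := (specRad_nonneg Y).trans_lt hs
  have hsum := summable_pow_inv_smul_of_specRad_lt hs
  set Z := s⁻¹ • Y
  have hZ : entryLE 0 Z := fun i j => mul_nonneg (inv_nonneg.2 hs0.le) (hY i j)
  set R := ∑' k, Z ^ k
  have hR : entryLE 0 R := fun i j =>
    (Pi.hasSum.1 (Pi.hasSum.1 hsum.hasSum i) j).nonneg fun k => entryLE_zero_pow hZ k i j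
  have hZR : Z * R = R - 1 := by
    have := hsum.one_sub_mul_tsum_pow
    rw [sub_mul, one_mul] at this
    rw [← this, sub_sub_cancel]
  have hZw : Z *ᵥ (R *ᵥ 1) = R *ᵥ 1 - 1 := by rw [mulVec_mulVec, hZR, sub_mulVec, one_mulVec]
  have hw1 : ∀ i, 1 ≤ (R *ᵥ 1) i := fun i => by
    have := mulVec_nonneg hZ (mulVec_nonneg hR (w := 1) fun _ => zero_le_one) i
    rwa [hZw, Pi.sub_apply, Pi.one_apply, sub_nonneg] at this
  refine ⟨R *ᵥ 1, fun i => zero_lt_one.trans_le (hw1 i), fun i => ?_⟩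
  have hYw : Y *ᵥ (R *ᵥ 1) = s • (R *ᵥ 1 - 1) := by
    rw [← hZw, ← smul_mulVec, smul_inv_smul₀ hs0.ne']
  rw [hYw, Pi.smul_apply, Pi.sub_apply, Pi.one_apply, smul_eq_mul, mul_sub, mul_one]
  linarith

end Resolvent

theorem spectrum.one_add_ne_zero_and_div_mem {𝕜 A : Type*} [Field 𝕜] [Ring A] [Algebra 𝕜 A]
    {X Y : A} (h₁ : (1 - X) * (1 + Y) = 1) (h₂ : (1 + Y) * (1 - X) = 1) {μ : 𝕜}
    (hμ : μ ∈ spectrum 𝕜 Y) : 1 + μ ≠ 0 ∧ μ / (1 + μ) ∈ spectrum 𝕜 X := by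
  have hu : IsUnit (1 + Y) := ⟨⟨1 + Y, 1 - X, h₂, h₁⟩, rfl⟩
  rw [spectrum.mem_iff] at hμ ⊢
  have hμ1 : 1 + μ ≠ 0 := by
    intro h
    rw [show μ = -1 by linear_combination h, map_neg, map_one, ← neg_add'] at hμ
    exact hμ hu.neg
  refine ⟨hμ1, fun hν => hμ ?_⟩
  have hYX : (1 + Y) * X = Y := calc
    (1 + Y) * X = (1 + Y) - (1 + Y) * (1 - X) := by noncomm_ring
    _ = Y := by rw [h₂, add_sub_cancel_left]
  have key : algebraMap 𝕜 A μ - Y =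
      (1 + Y) * (algebraMap 𝕜 A (1 + μ) * (algebraMap 𝕜 A (μ / (1 + μ)) - X)) := by
    rw [mul_sub, ← map_mul, mul_div_cancel₀ _ hμ1]
    simp only [Algebra.algebraMap_eq_smul_one, smul_mul_assoc, one_mul, mul_sub, mul_smul_comm,
      mul_one, hYX]
    module
  rw [key]
  exact hu.mul (((isUnit_iff_ne_zero.mpr hμ1).map _).mul hν)

section GeneralizedInverse

variable {m n k R : Type*} [Fintype m] [Fintype n] [CommRing R]

theorem mul_mul_eq_of_range_le [Fintype k] {A : Matrix m n R} {A' : Matrix n m R}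
    {M : Matrix m k R} (hA : A * A' * A = A)
    (h : LinearMap.range M.mulVecLin ≤ LinearMap.range A.mulVecLin) : A * A' * M = M := by
  refine ext_iff_mulVec.2 fun x => ?_
  obtain ⟨y, hy⟩ := h ⟨x, rfl⟩
  have hy' : A *ᵥ y = M *ᵥ x := hy
  rw [← mulVec_mulVec, ← hy', mulVec_mulVec, hA]

theorem mul_mul_eq_of_ker_le {A : Matrix m n R} {A' : Matrix n m R} {M : Matrix k n R}
    (hA : A * A' * A = A) (h : LinearMap.ker A.mulVecLin ≤ LinearMap.ker M.mulVecLin) :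
    M * (A' * A) = M := by
  refine ext_iff_mulVec.2 fun x => ?_
  have hx : x - (A' * A) *ᵥ x ∈ LinearMap.ker A.mulVecLin := by
    rw [LinearMap.mem_ker, mulVecLin_apply, mulVec_sub, mulVec_mulVec, ← Matrix.mul_assoc, hA,
      sub_self]
  have := h hx
  rwa [LinearMap.mem_ker, mulVecLin_apply, mulVec_sub, mulVec_mulVec, sub_eq_zero, eq_comm] at this

end GeneralizedInverse

section MoorePenrose

variable {m n : Type*} [Fintype m] [Fintype n]

theorem IsMoorePenrose.mul_eq_of_range_eq {A M : Matrix m n ℝ} {A' M' : Matrix n m ℝ}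
    (hA : IsMoorePenrose A A') (hM : IsMoorePenrose M M')
    (h : LinearMap.range M.mulVecLin = LinearMap.range A.mulVecLin) : A * A' = M * M' := by
  have hPQ : A * A' * (M * M') = M * M' := by
    rw [← Matrix.mul_assoc, mul_mul_eq_of_range_le hA.1 h.le]
  have hQP : M * M' * (A * A') = A * A' := by
    rw [← Matrix.mul_assoc, mul_mul_eq_of_range_le hM.1 h.ge]
  calc A * A' = (M * M' * (A * A'))ᵀ := by rw [hQP, hA.2.2.1]
    _ = M * M' := by rw [transpose_mul, hA.2.2.1, hM.2.2.1, hPQ]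

theorem IsMoorePenrose.mul_eq_of_ker_eq {A M : Matrix m n ℝ} {A' M' : Matrix n m ℝ}
    (hA : IsMoorePenrose A A') (hM : IsMoorePenrose M M')
    (h : LinearMap.ker M.mulVecLin = LinearMap.ker A.mulVecLin) : A' * A = M' * M := by
  have hPQ : A' * A * (M' * M) = A' * A := by
    rw [Matrix.mul_assoc, mul_mul_eq_of_ker_le hM.1 h.le]
  have hQP : M' * M * (A' * A) = M' * M := by
    rw [Matrix.mul_assoc, mul_mul_eq_of_ker_le hA.1 h.ge]
  calc A' * A = (A' * A * (M' * M))ᵀ := by rw [hPQ, hA.2.2.2]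
    _ = M' * M := by rw [transpose_mul, hA.2.2.2, hM.2.2.2, hQP]

variable [DecidableEq m]

theorem IsMoorePenrose.one_sub_mul_one_add_of_proper_splitting {A M N : Matrix m n ℝ}
    {A' M' : Matrix n m ℝ} (hA : IsMoorePenrose A A') (hM : IsMoorePenrose M M')
    (hAMN : A = M - N) (hrange : LinearMap.range M.mulVecLin = LinearMap.range A.mulVecLin)
    (hker : LinearMap.ker M.mulVecLin = LinearMap.ker A.mulVecLin) :
    (1 - N * M') * (1 + N * A') = 1 := by
  have hN : N = M - A := by rw [hAMN, sub_sub_cancel]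
  have hM'NA' : M' * N * A' = A' - M' := by
    rw [hN, Matrix.mul_sub, Matrix.sub_mul, ← hA.mul_eq_of_ker_eq hM hker, hA.2.1,
      Matrix.mul_assoc M', hA.mul_eq_of_range_eq hM hrange, ← Matrix.mul_assoc, hM.2.1]
  have hXY : N * M' * (N * A') = N * A' - N * M' := by
    rw [← Matrix.mul_assoc, Matrix.mul_assoc N, Matrix.mul_assoc, hM'NA', Matrix.mul_sub]
  calc (1 - N * M') * (1 + N * A') = 1 + N * A' - N * M' - N * M' * (N * A') := by noncomm_ring
    _ = 1 := by rw [hXY]; abel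

end MoorePenrose

theorem one_sub_mul_one_add_of_splitting {n R : Type*} [Fintype n] [DecidableEq n] [CommRing R]
    {B M N : Matrix n n R} (hBMN : B = M - N) (hM : IsUnit M.det) (hB : IsUnit B.det) :
    (1 - N * M⁻¹) * (1 + N * B⁻¹) = 1 := by
  have h₁ : 1 - N * M⁻¹ = B * M⁻¹ := by rw [hBMN, sub_mul, mul_nonsing_inv _ hM]
  have h₂ : 1 + N * B⁻¹ = M * B⁻¹ := by
    rw [show M = B + N by rw [hBMN, sub_add_cancel], add_mul, mul_nonsing_inv _ hB]
  rw [h₁, h₂, mul_assoc, ← mul_assoc M⁻¹, nonsing_inv_mul _ hM, one_mul, mul_nonsing_inv _ hB]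

theorem isUnit_det_transpose_mul_self_add_smul {m n : Type*} [Fintype m] [Fintype n]
    [DecidableEq n] (A : Matrix m n ℝ) {l : ℝ} (hl : 0 < l) :
    IsUnit (Aᵀ * A + l • (1 : Matrix n n ℝ)).det := by
  rw [← isUnit_iff_isUnit_det, ← conjTranspose_eq_transpose_of_trivial]
  exact (PosDef.posSemidef_add (posSemidef_conjTranspose_mul_self A) (PosDef.one.smul hl)).isUnit

section InverseRelation

variable {n : Type*} [Fintype n] [DecidableEq n] {X Y : Matrix n n ℝ}

theorem specRad_le_div_one_add (hX : entryLE 0 X) (hXY : (1 - X) * (1 + Y) = 1) {w : n → ℝ}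
    (hw : ∀ i, 0 < w i + (Y *ᵥ w) i) {s : ℝ} (hs : 0 ≤ s) (hYw : ∀ i, (Y *ᵥ w) i ≤ s * w i) :
    specRad X ≤ s / (1 + s) := by
  have hXw : X *ᵥ ((1 + Y) *ᵥ w) = Y *ᵥ w := by
    have hX1Y : X * (1 + Y) = Y := calc
      X * (1 + Y) = (1 + Y) - (1 - X) * (1 + Y) := by noncomm_ring
      _ = Y := by rw [hXY, add_sub_cancel_left]
    rw [mulVec_mulVec, hX1Y]
  rw [add_mulVec, one_mulVec] at hXw
  refine specRad_le_of_mulVec_le (w := w + Y *ᵥ w) hX hw (by positivity) fun i => ?_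
  rw [hXw, div_mul_eq_mul_div, le_div_iff₀ (by positivity), Pi.add_apply]
  linarith [hYw i]

theorem specRad_lt_one (hX : entryLE 0 X) (hY : entryLE 0 Y) (hXY : (1 - X) * (1 + Y) = 1) :
    specRad X < 1 := by
  have hY1 : ∀ i, 0 ≤ (Y *ᵥ 1) i := mulVec_nonneg hY fun _ => zero_le_one
  set s := ∑ i, (Y *ᵥ 1) i
  have hs : 0 ≤ s := Finset.sum_nonneg fun i _ => hY1 i
  calc specRad X ≤ s / (1 + s) :=
        specRad_le_div_one_add (w := 1) hX hXY (fun i => add_pos_of_pos_of_nonneg one_pos (hY1 i))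
          hs fun i => by
            rw [Pi.one_apply, mul_one]
            exact Finset.single_le_sum (fun j _ => hY1 j) (Finset.mem_univ i)
    _ < 1 := (div_lt_one (by positivity)).2 (lt_one_add s)

theorem specRad_le_mul_one_add (hXY : (1 - X) * (1 + Y) = 1) :
    specRad Y ≤ specRad X * (1 + specRad Y) := by
  have hY0 := specRad_nonneg Y
  have h₁ : (1 - X.map Complex.ofReal) * (1 + Y.map Complex.ofReal) = 1 := by
    have := congrArg Complex.ofRealHom.mapMatrix hXY
    simp only [map_mul, map_sub, map_add, map_one] at this
    exact this
  refine specRad_le (mul_nonneg (specRad_nonneg X) (by linarith)) fun μ hμ => ?_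
  obtain ⟨hμ1, hν⟩ := spectrum.one_add_ne_zero_and_div_mem h₁ (mul_eq_one_comm.mp h₁) hμ
  calc ‖μ‖ = ‖μ / (1 + μ)‖ * ‖1 + μ‖ := by
        rw [norm_div, div_mul_cancel₀ _ (norm_ne_zero_iff.2 hμ1)]
    _ ≤ specRad X * (1 + ‖μ‖) :=
      mul_le_mul (norm_le_specRad hν) (norm_add_le _ _ |>.trans_eq (by rw [norm_one]))
        (norm_nonneg _) (specRad_nonneg X)
    _ ≤ specRad X * (1 + specRad Y) :=
      mul_le_mul_of_nonneg_left (by linarith [norm_le_specRad hμ]) (specRad_nonneg X)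

theorem le_div_one_add_of_tendsto_specRad {ι : Type*} {F : Filter ι} [F.NeBot]
    {Xf Yf : ι → Matrix n n ℝ} {L : Matrix n n ℝ} (hX : ∀ᶠ a in F, entryLE 0 (Xf a))
    (hXY : ∀ᶠ a in F, (1 - Xf a) * (1 + Yf a) = 1) (hYL : Tendsto Yf F (𝓝 L))
    (hL : entryLE 0 L) (hLY : entryLE L Y) {r : ℝ}
    (hr : Tendsto (fun a => specRad (Xf a)) F (𝓝 r)) {s : ℝ} (hs : specRad Y < s) :
    r ≤ s / (1 + s) := by
  obtain ⟨w, hw, hYw⟩ := exists_pos_mulVec_lt_smul (fun i j => (hL i j).trans (hLY i j)) hs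
  have hLw : Tendsto (fun a => Yf a *ᵥ w) F (𝓝 (L *ᵥ w)) :=
    ((continuous_id.matrix_mulVec continuous_const).tendsto L).comp hYL
  have hev : ∀ᶠ a in F, ∀ i, 0 < w i + (Yf a *ᵥ w) i ∧ (Yf a *ᵥ w) i ≤ s * w i := by
    refine eventually_all.2 fun i => ?_
    have hLwi := tendsto_pi_nhds.1 hLw i
    have h₀ : 0 < w i + (L *ᵥ w) i :=
      add_pos_of_pos_of_nonneg (hw i) (mulVec_nonneg hL (fun j => (hw j).le) i)
    have h₁ : (L *ᵥ w) i < s * w i :=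
      (mulVec_le_mulVec hLY (fun j => (hw j).le) i).trans_lt (hYw i)
    exact ((tendsto_const_nhds.add hLwi).eventually_const_lt h₀).and
      ((hLwi.eventually_lt_const h₁).mono fun _ h => h.le)
  refine le_of_tendsto hr ?_
  filter_upwards [hX, hXY, hev] with a hXa hXYa hva
  exact specRad_le_div_one_add hXa hXYa (fun i => (hva i).1)
    ((specRad_nonneg Y).trans hs.le) fun i => (hva i).2

end InverseRelation

theorem stmt1_general {n : ℕ} (A M N : Matrix (Fin n) (Fin n) ℝ)
    (Adag Mdag : Matrix (Fin n) (Fin n) ℝ)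
    (hAdag : IsMoorePenrose A Adag) (hMdag : IsMoorePenrose M Mdag)
    -- `A = M − N` is a weak proper splitting of the second type of `A`
    (hsplit : A = M - N)
    (hrange : LinearMap.range M.mulVecLin = LinearMap.range A.mulVecLin)
    (hker : LinearMap.ker M.mulVecLin = LinearMap.ker A.mulVecLin)
    (hweak : entryLE 0 (N * Mdag))
    -- for each `λ > 0`, `B_λ = M_λ − N_λ` is a weak splitting of the second type
    (Mlam Nlam : ℝ → Matrix (Fin n) (Fin n) ℝ)
    (hBsplit : ∀ l : ℝ, 0 < l →
      Aᵀ * A + l • (1 : Matrix (Fin n) (Fin n) ℝ) = Mlam l - Nlam l)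
    (hMinv : ∀ l : ℝ, 0 < l → IsUnit (Mlam l).det)
    (hweakl : ∀ l : ℝ, 0 < l → entryLE 0 (Nlam l * (Mlam l)⁻¹))
    -- `N_λ B_λ⁻¹ → L` entrywise as `λ → 0⁺`, with `NA† ≥ L ≥ 0`
    (L : Matrix (Fin n) (Fin n) ℝ)
    (hLtend : Tendsto
      (fun l : ℝ => Nlam l * (Aᵀ * A + l • (1 : Matrix (Fin n) (Fin n) ℝ))⁻¹)
      (𝓝[>] 0) (𝓝 L))
    (hL0 : entryLE 0 L) (hLA : entryLE L (N * Adag)) :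
    specRad (Mdag * N) < 1 ∧
      ∀ r : ℝ, Tendsto (fun l : ℝ => specRad ((Mlam l)⁻¹ * Nlam l)) (𝓝[>] 0) (𝓝 r) →
        r ≤ specRad (Mdag * N) := by
  have hY : entryLE 0 (N * Adag) := fun i j => (hL0 i j).trans (hLA i j)
  have hXY := hAdag.one_sub_mul_one_add_of_proper_splitting hMdag hsplit hrange hker
  have hXYl : ∀ᶠ l in 𝓝[>] (0 : ℝ), (1 - Nlam l * (Mlam l)⁻¹) *
      (1 + Nlam l * (Aᵀ * A + l • (1 : Matrix (Fin n) (Fin n) ℝ))⁻¹) = 1 :=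
    eventually_nhdsWithin_of_forall fun l hl => one_sub_mul_one_add_of_splitting (hBsplit l hl)
      (hMinv l hl) (isUnit_det_transpose_mul_self_add_smul A hl)
  simp only [specRad_mul_comm Mdag, specRad_mul_comm (Mlam _)⁻¹]
  refine ⟨specRad_lt_one hweak hY hXY, fun r hr => ?_⟩
  set ρ := specRad (N * Adag)
  have hρ : ∀ s, ρ < s → r ≤ s / (1 + s) := fun s hs =>
    le_div_one_add_of_tendsto_specRad (F := 𝓝[>] 0) (eventually_nhdsWithin_of_forall hweakl) hXYl
      hLtend hL0 hLA hr hs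
  have hρ1 : 0 < 1 + ρ := add_pos_of_pos_of_nonneg one_pos (specRad_nonneg _)
  have hcont : Tendsto (fun s : ℝ => s / (1 + s)) (𝓝[>] ρ) (𝓝 (ρ / (1 + ρ))) :=
    (continuousAt_id.div (continuousAt_const.add continuousAt_id)
      hρ1.ne').tendsto.mono_left nhdsWithin_le_nhds
  calc r ≤ ρ / (1 + ρ) := ge_of_tendsto hcont (eventually_nhdsWithin_of_forall hρ)
    _ ≤ specRad (N * Mdag) := (div_le_iff₀ hρ1).2 (specRad_le_mul_one_add hXY)

theorem stmt1 {n : ℕ} (A M N : Matrix (Fin n) (Fin n) ℝ)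
    (Adag Mdag : Matrix (Fin n) (Fin n) ℝ)
    (hAsing : ¬ IsUnit A.det)
    (hAdag : IsMoorePenrose A Adag) (hMdag : IsMoorePenrose M Mdag)
    -- `A = M − N` is a weak proper splitting of the second type of `A`
    (hsplit : A = M - N)
    (hrange : LinearMap.range M.mulVecLin = LinearMap.range A.mulVecLin)
    (hker : LinearMap.ker M.mulVecLin = LinearMap.ker A.mulVecLin)
    (hweak : entryLE 0 (N * Mdag))
    -- for each `λ > 0`, `B_λ = M_λ − N_λ` is a weak splitting of the second type
    (Mlam Nlam : ℝ → Matrix (Fin n) (Fin n) ℝ)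
    (hBsplit : ∀ l : ℝ, 0 < l →
      Aᵀ * A + l • (1 : Matrix (Fin n) (Fin n) ℝ) = Mlam l - Nlam l)
    (hMinv : ∀ l : ℝ, 0 < l → IsUnit (Mlam l).det)
    (hweakl : ∀ l : ℝ, 0 < l → entryLE 0 (Nlam l * (Mlam l)⁻¹))
    -- `N_λ B_λ⁻¹ → L` entrywise as `λ → 0⁺`, with `NA† ≥ L ≥ 0`
    (L : Matrix (Fin n) (Fin n) ℝ)
    (hLtend : Tendsto
      (fun l : ℝ => Nlam l * (Aᵀ * A + l • (1 : Matrix (Fin n) (Fin n) ℝ))⁻¹)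
      (𝓝[>] 0) (𝓝 L))
    (hL0 : entryLE 0 L) (hLA : entryLE L (N * Adag)) :
    specRad (Mdag * N) < 1 ∧
      ∀ r : ℝ, Tendsto (fun l : ℝ => specRad ((Mlam l)⁻¹ * Nlam l)) (𝓝[>] 0) (𝓝 r) →
        r ≤ specRad (Mdag * N) :=
  stmt1_general A M N Adag Mdag hAdag hMdag hsplit hrange hker hweak Mlam Nlam hBsplit hMinv hweakl
    L hLtend hL0 hLA
end

section
/- Let A = P − R + S be a double weak splitting of type II of a symmetric nonsingular matrix A ∈ ℝ^{n×n}, with iteration matrix W̃ = [[(RP⁻¹)ᵀ, −(SP⁻¹)ᵀ],[I, 0]]. Then ρ(W̃) < 1 if and only if ρ((R − S)P⁻¹) < 1. -/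
open Matrix Filter Topology

/-- Iteration matrix of a double weak splitting of type II:
`W̃ = [[(RP⁻¹)ᵀ, −(SP⁻¹)ᵀ],[I, 0]]`. -/
noncomputable def itMatII {n : Type*} [Fintype n] [DecidableEq n]
    (P R S : Matrix n n ℝ) : Matrix (n ⊕ n) (n ⊕ n) ℝ :=
  Matrix.fromBlocks ((R * P⁻¹)ᵀ) (-((S * P⁻¹)ᵀ)) 1 0

/-- Iteration matrix of a double weak splitting of type I:
`Ŵ = [[P⁻¹R, −P⁻¹S],[I, 0]]`. -/
noncomputable def itMatI {n : Type*} [Fintype n] [DecidableEq n]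
    (P R S : Matrix n n ℝ) : Matrix (n ⊕ n) (n ⊕ n) ℝ :=
  Matrix.fromBlocks (P⁻¹ * R) (-(P⁻¹ * S)) 1 0

/-!
A nonnegative matrix `M` has `ρ(M) ≥ 1` exactly when it admits a nonzero subinvariant vector
`0 ≤ u ≤ M u`: the moduli of an eigenvector for an eigenvalue of modulus at least one give such a
vector, and conversely `u ≤ Mᵏ u` is incompatible with `Mᵏ → 0`, which Gelfand's formula gives
when `ρ(M) < 1`. For `B, C ≥ 0`, a subinvariant vector `(x, y)` of `[[B, C], [I, 0]]` satisfies
`y ≤ x` and hence `x ≤ (B + C) x`, while a subinvariant `u` of `B + C` yields the subinvariant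
vector `(u, u)`. Taking `B = (RP⁻¹)ᵀ`, `C = -(SP⁻¹)ᵀ` and using `ρ(Mᵀ) = ρ(M)` gives the theorem.
-/

section Gelfand

variable {A : Type*} [NormedRing A] [NormedAlgebra ℂ A] [CompleteSpace A]

theorem tendsto_pow_atTop_nhds_zero_of_spectralRadius_lt_one {a : A}
    (h : spectralRadius ℂ a < 1) : Tendsto (a ^ ·) atTop (𝓝 0) := by
  obtain ⟨r, hρr, hr1⟩ := ENNReal.lt_iff_exists_nnreal_btwn.mp h
  have hgelfand := spectrum.pow_nnnorm_pow_one_div_tendsto_nhds_spectralRadius a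
  have hpow : ∀ᶠ k : ℕ in atTop, ‖a ^ k‖ ≤ (r : ℝ) ^ k := by
    filter_upwards [hgelfand.eventually_lt_const hρr, eventually_ne_atTop 0] with k hk hk0
    rw [one_div, ENNReal.rpow_inv_lt_iff (by positivity), ENNReal.rpow_natCast] at hk
    exact_mod_cast hk.le
  exact squeeze_zero_norm' hpow
    (tendsto_pow_atTop_nhds_zero_of_lt_one r.coe_nonneg (by exact_mod_cast hr1))

end Gelfand

namespace Matrix

section Field

variable {m K : Type*} [Fintype m] [DecidableEq m] [Field K]

theorem exists_mulVec_eq_smul_of_mem_spectrum_s6 {M : Matrix m m K} {z : K}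
    (hz : z ∈ spectrum K M) : ∃ v ≠ 0, M *ᵥ v = z • v := by
  rw [← spectrum_toLin', ← Module.End.hasEigenvalue_iff_mem_spectrum] at hz
  obtain ⟨v, hv⟩ := hz.exists_hasEigenvector
  exact ⟨v, hv.2, by simpa using hv.apply_eq_smul⟩

theorem spectrum_transpose (M : Matrix m m K) : spectrum K Mᵀ = spectrum K M := by
  ext z
  rw [spectrum.mem_iff, spectrum.mem_iff, ← isUnit_transpose, transpose_sub, transpose_transpose,
    algebraMap_eq_diagonal, diagonal_transpose]

end Field

section Nonneg

variable {m n : Type*} [Fintype n] {B : Matrix m n ℝ}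

theorem mulVec_mono_of_nonneg (hB : entryLE 0 B) {u v : n → ℝ} (h : u ≤ v) :
    B *ᵥ u ≤ B *ᵥ v :=
  fun i => Finset.sum_le_sum fun j _ => mul_le_mul_of_nonneg_left (h j) (hB i j)

theorem norm_map_ofReal_mulVec_le (hB : entryLE 0 B) (v : n → ℂ) (i : m) :
    ‖(B.map Complex.ofReal *ᵥ v) i‖ ≤ (B *ᵥ fun j => ‖v j‖) i := by
  simp only [mulVec, dotProduct, map_apply]
  refine (norm_sum_le _ _).trans_eq (Finset.sum_congr rfl fun j _ => ?_)
  rw [norm_mul, Complex.norm_real, Real.norm_of_nonneg (hB i j)]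

end Nonneg

section SpecRad

variable {m : Type*} [Fintype m] [DecidableEq m]

theorem norm_le_specRad {B : Matrix m m ℝ} {z : ℂ} (hz : z ∈ spectrum ℂ (B.map Complex.ofReal)) :
    ‖z‖ ≤ specRad B :=
  le_csSup ((finite_spectrum _).image _).bddAbove ⟨z, hz, rfl⟩

theorem specRad_lt_one_iff (B : Matrix m m ℝ) :
    specRad B < 1 ↔ ∀ z ∈ spectrum ℂ (B.map Complex.ofReal), ‖z‖ < 1 := by
  refine ⟨fun h z hz => (norm_le_specRad hz).trans_lt h, fun h => ?_⟩
  rcases (spectrum ℂ (B.map Complex.ofReal)).eq_empty_or_nonempty with hσ | hσ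
  · simp [specRad, hσ]
  · obtain ⟨z, hz, hρ⟩ := (hσ.image fun z : ℂ => ‖z‖).csSup_mem ((finite_spectrum _).image _)
    rw [specRad, ← hρ]
    exact h z hz

theorem specRad_transpose (B : Matrix m m ℝ) : specRad Bᵀ = specRad B := by
  rw [specRad, transpose_map, spectrum_transpose, specRad]

theorem spectralRadius_map_ofReal_le_specRad (B : Matrix m m ℝ) :
    spectralRadius ℂ (B.map Complex.ofReal) ≤ ENNReal.ofReal (specRad B) :=
  iSup₂_le fun z hz => by
    rw [← ENNReal.ofReal_coe_nnreal, coe_nnnorm]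
    exact ENNReal.ofReal_le_ofReal (norm_le_specRad hz)

theorem tendsto_pow_atTop_nhds_zero_of_specRad_lt_one {B : Matrix m m ℝ} (h : specRad B < 1) :
    Tendsto (B ^ ·) atTop (𝓝 0) := by
  -- The `ℓ∞` operator norm induces the entrywise topology, so `Matrix m m ℂ` is a Banach algebra.
  let : NormedRing (Matrix m m ℂ) := Matrix.linftyOpNormedRing
  let : NormedAlgebra ℂ (Matrix m m ℂ) := Matrix.linftyOpNormedAlgebra
  have : CompleteSpace (Matrix m m ℂ) := FiniteDimensional.complete ℂ _
  have hρ : spectralRadius ℂ (B.map Complex.ofReal) < 1 :=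
    (spectralRadius_map_ofReal_le_specRad B).trans_lt (ENNReal.ofReal_lt_one.mpr h)
  have hre : Continuous fun M : Matrix m m ℂ => M.map Complex.re :=
    continuous_id.matrix_map Complex.continuous_re
  convert (hre.tendsto 0).comp (tendsto_pow_atTop_nhds_zero_of_spectralRadius_lt_one hρ) using 1
  · ext k : 1
    have : B.map Complex.ofReal ^ k = (B ^ k).map Complex.ofReal :=
      (map_pow Complex.ofRealHom.mapMatrix B k).symm
    rw [Function.comp_apply, this, map_map,
      show Complex.re ∘ Complex.ofReal = id from funext Complex.ofReal_re, map_id]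
  · simp

theorem le_pow_mulVec_of_le_mulVec {B : Matrix m m ℝ} (hB : entryLE 0 B) {u : m → ℝ}
    (hu : u ≤ B *ᵥ u) (k : ℕ) : u ≤ B ^ k *ᵥ u := by
  induction k with
  | zero => rw [pow_zero, one_mulVec]
  | succ k ih =>
    rw [pow_succ', ← mulVec_mulVec]
    exact hu.trans (mulVec_mono_of_nonneg hB ih)

theorem one_le_specRad_iff_exists_le_mulVec {B : Matrix m m ℝ} (hB : entryLE 0 B) :
    1 ≤ specRad B ↔ ∃ u : m → ℝ, 0 ≤ u ∧ u ≠ 0 ∧ u ≤ B *ᵥ u := by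
  constructor
  · intro h
    obtain ⟨z, hz, hz1⟩ : ∃ z ∈ spectrum ℂ (B.map Complex.ofReal), 1 ≤ ‖z‖ := by
      by_contra! hσ
      exact h.not_gt ((specRad_lt_one_iff B).mpr hσ)
    obtain ⟨v, hv, hBv⟩ := exists_mulVec_eq_smul_of_mem_spectrum_s6 hz
    refine ⟨fun j => ‖v j‖, fun j => norm_nonneg _, fun h0 => hv ?_, fun i => ?_⟩
    · exact funext fun j => norm_eq_zero.mp (congrFun h0 j)
    · calc ‖v i‖ ≤ ‖z‖ * ‖v i‖ := le_mul_of_one_le_left (norm_nonneg _) hz1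
        _ = ‖(B.map Complex.ofReal *ᵥ v) i‖ := by rw [hBv, Pi.smul_apply, smul_eq_mul, norm_mul]
        _ ≤ (B *ᵥ fun j => ‖v j‖) i := norm_map_ofReal_mulVec_le hB v i
  · rintro ⟨u, hu0, hu, hle⟩
    by_contra! h
    obtain ⟨i, hi⟩ := Function.ne_iff.mp hu
    have hlim : Tendsto (fun k => (B ^ k *ᵥ u) i) atTop (𝓝 0) := by
      have hcont : Continuous fun M : Matrix m m ℝ => (M *ᵥ u) i :=
        (continuous_apply i).comp (continuous_id.matrix_mulVec continuous_const)
      simpa [Function.comp_def] using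
        (hcont.tendsto 0).comp (tendsto_pow_atTop_nhds_zero_of_specRad_lt_one h)
    exact hi (le_antisymm (ge_of_tendsto' hlim fun k => le_pow_mulVec_of_le_mulVec hB hle k i)
      (hu0 i))

theorem specRad_fromBlocks_one_zero_lt_one_iff {B C : Matrix m m ℝ} (hB : entryLE 0 B)
    (hC : entryLE 0 C) :
    specRad (fromBlocks B C (1 : Matrix m m ℝ) 0) < 1 ↔ specRad (B + C) < 1 := by
  have hW : entryLE 0 (fromBlocks B C (1 : Matrix m m ℝ) 0) := by
    rintro (i | i) (j | j)
    exacts [hB i j, hC i j, by simp [one_apply, apply_ite], le_rfl]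
  have hBC : entryLE 0 (B + C) := fun i j => add_nonneg (hB i j) (hC i j)
  simp only [← not_le, one_le_specRad_iff_exists_le_mulVec hW,
    one_le_specRad_iff_exists_le_mulVec hBC, not_iff_not, fromBlocks_mulVec]
  constructor
  · rintro ⟨u, hu0, hu, hle⟩
    have hyx : u ∘ Sum.inr ≤ u ∘ Sum.inl := fun i => by simpa using hle (Sum.inr i)
    refine ⟨u ∘ Sum.inl, fun i => hu0 _, fun hx => hu ?_, fun i => ?_⟩
    · have hy : u ∘ Sum.inr = 0 := le_antisymm (hx ▸ hyx) fun i => hu0 _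
      ext (i | i)
      exacts [congrFun hx i, congrFun hy i]
    · calc u (Sum.inl i) ≤ (B *ᵥ (u ∘ Sum.inl) + C *ᵥ (u ∘ Sum.inr)) i := hle (Sum.inl i)
        _ ≤ (B *ᵥ (u ∘ Sum.inl) + C *ᵥ (u ∘ Sum.inl)) i :=
          add_le_add le_rfl (mulVec_mono_of_nonneg hC hyx i)
        _ = ((B + C) *ᵥ (u ∘ Sum.inl)) i := by rw [add_mulVec]
  · rintro ⟨u, hu0, hu, hle⟩
    refine ⟨Sum.elim u u, ?_, fun h => hu (funext fun i => congrFun h (Sum.inl i)), ?_⟩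
    · rintro (i | i) <;> exact hu0 i
    · rintro (i | i)
      · simpa [add_mulVec] using hle i
      · simp

end SpecRad

end Matrix

theorem stmt6_general {n : ℕ} (P R S : Matrix (Fin n) (Fin n) ℝ)
    (hRP : entryLE 0 (R * P⁻¹)) (hSP : entryLE 0 (-(S * P⁻¹))) :
    specRad (itMatII P R S) < 1 ↔ specRad ((R - S) * P⁻¹) < 1 := by
  have hB : entryLE 0 (R * P⁻¹)ᵀ := fun i j => hRP j i
  have hC : entryLE 0 (-(S * P⁻¹))ᵀ := fun i j => hSP j i
  rw [itMatII, ← transpose_neg, specRad_fromBlocks_one_zero_lt_one_iff hB hC, ← transpose_add,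
    ← sub_eq_add_neg, ← sub_mul, specRad_transpose]

theorem stmt6 {n : ℕ} (A P R S : Matrix (Fin n) (Fin n) ℝ)
    (hAsym : Aᵀ = A) (hAinv : IsUnit A.det)
    -- `A = P − R + S` is a double weak splitting of type II
    (hsplit : A = P - R + S) (hPinv : IsUnit P.det)
    (hRP : entryLE 0 (R * P⁻¹)) (hSP : entryLE 0 (-(S * P⁻¹))) :
    specRad (itMatII P R S) < 1 ↔ specRad ((R - S) * P⁻¹) < 1 :=
  stmt6_general P R S hRP hSP
end
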